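/- Let (S_n) be a centered real random walk with Var(S_1) > 0 and E[e^{u S_1}] < ∞ for all u ∈ (−(1+η), η) for some η > 0. Then there exists a constant c > 1 such that for all L ≥ 1 and all 0 ≤ a ≤ L: E_a[ e^{−S_{τ_0^-}} · 1_{{τ_0^- < τ_L^+}} ] ≤ c · (L − a + 1)/L. -/

import Mathlib

open MeasureTheory ProbabilityTheory Filter Topology Real
open scoped ENNReal NNReal

variable {Ω : Type*} [MeasurableSpace Ω]

/-- The random walk started at `x` with increments `X`. -/
noncomputable def walk (X : ℕ → Ω → ℝ) (x : ℝ) (n : ℕ) (ω : Ω) : ℝ :=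
  x + ∑ i ∈ Finset.range n, X i ω

/-- `τ_a^+`: the first time the walk (started at `x`) exceeds level `a`, as an
extended natural number (`⊤` if the walk never exceeds `a`). -/
noncomputable def hitAbove (X : ℕ → Ω → ℝ) (x a : ℝ) (ω : Ω) : ℕ∞ :=
  ⨅ (n : ℕ) (_ : a < walk X x n ω), (n : ℕ∞)

/-- `τ_a^-`: the first time the walk (started at `x`) goes below level `a`. -/
noncomputable def hitBelow (X : ℕ → Ω → ℝ) (x a : ℝ) (ω : Ω) : ℕ∞ :=
  ⨅ (n : ℕ) (_ : walk X x n ω < a), (n : ℕ∞)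

/-- `S_{τ_a^+}`: the walk stopped when it first exceeds `a` (junk value if never). -/
noncomputable def stopAbove (X : ℕ → Ω → ℝ) (x a : ℝ) (ω : Ω) : ℝ :=
  walk X x (hitAbove X x a ω).toNat ω

/-- `S_{τ_a^-}`: the walk stopped when it first goes below `a` (junk value if never). -/
noncomputable def stopBelow (X : ℕ → Ω → ℝ) (x a : ℝ) (ω : Ω) : ℝ :=
  walk X x (hitBelow X x a ω).toNat ω

/-- A real random variable has non-arithmetic distribution: its law is not
supported on any lattice `hℤ`. -/
def NonArithmetic (Y : Ω → ℝ) (μ : Measure Ω) : Prop :=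
  ¬ ∃ h : ℝ, ∀ᵐ ω ∂μ, ∃ k : ℤ, Y ω = k * h

/-!
Comparison with a supersolution. Build `Φ ≥ 0` that is superharmonic for the walk on `[0, L]`
(`E Φ (y + X₀) ≤ Φ y`), dominates the payoff `exp (-y)` for `y ≤ 0`, and has
`Φ a ≤ c (L - a + 1) / L`; stopping the supermartingale `Φ (S_n)` when the walk leaves `[0, L]`
bounds the expectation by `Φ a`.

Take `Φ y = l y + R (y - L) / L` with `l y = 2 e^{-y} - ε e^{-y/2}` and
`R z = C₀ - A z + e^{2δz} - r e^{δz}`. As the step law is centred and not degenerate,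
`E e^{u X₀} > 1` for `u ≠ 0`, so `e^{2uy}` is subharmonic; but where `u y ≤ 0` it is below
`e^{uy}`, and with the right ratio of coefficients the pair is superharmonic (`u = -1/2` on
`y ≥ 0`, `u = δ` on `z ≤ 0`), while `-A z` is harmonic. The linear growth of `R` left of `0`
and its lower bound `A` right of `0` absorb the negative part of `l`.
-/

open Function

lemma mul_exp_neg_half_mul_le_max (L : ℝ) {y : ℝ} (hy : 0 ≤ y) :
    L * exp (-(1 / 2) * y) ≤ max 1 (1 + L - y) := by
  have hsq : (1 + y / 4) ^ 2 ≤ exp (y / 2) := by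
    calc (1 + y / 4) ^ 2 ≤ exp (y / 4) ^ 2 :=
          pow_le_pow_left₀ (by linarith) (by linarith [add_one_le_exp (y / 4)]) 2
      _ = exp (y / 2) := by rw [← exp_nat_mul]; ring_nf
  rw [show -(1 / 2) * y = -(y / 2) by ring, exp_neg, ← div_eq_mul_inv, div_le_iff₀ (exp_pos _)]
  rcases le_total y L with hyL | hLy
  · calc L ≤ (1 + L - y) * (1 + y / 4) ^ 2 := by
          nlinarith [sq_nonneg (1 - y / 4), mul_nonneg (sub_nonneg.2 hyL) hy]
      _ ≤ max 1 (1 + L - y) * exp (y / 2) :=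
          mul_le_mul (le_max_right _ _) hsq (by positivity) (zero_le_one.trans (le_max_left _ _))
  · calc L ≤ (1 + y / 4) ^ 2 := by nlinarith [sq_nonneg (1 - y / 4)]
      _ ≤ max 1 (1 + L - y) * exp (y / 2) := by
          rw [← one_mul ((1 + y / 4) ^ 2)]
          exact mul_le_mul (le_max_left _ _) hsq (by positivity)
            (zero_le_one.trans (le_max_left _ _))

def SuperharmonicOn (ν : Measure ℝ) (f : ℝ → ℝ) (s : Set ℝ) : Prop :=
  ∀ x ∈ s, Integrable (fun t => f (x + t)) ν ∧ ∫ t, f (x + t) ∂ν ≤ f x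

namespace SuperharmonicOn

variable {ν : Measure ℝ} {f g : ℝ → ℝ} {s t : Set ℝ}

lemma mono (hf : SuperharmonicOn ν f s) (hts : t ⊆ s) : SuperharmonicOn ν f t :=
  fun x hx => hf x (hts hx)

lemma add (hf : SuperharmonicOn ν f s) (hg : SuperharmonicOn ν g s) :
    SuperharmonicOn ν (fun y => f y + g y) s := by
  intro x hx
  obtain ⟨hfi, hfle⟩ := hf x hx
  obtain ⟨hgi, hgle⟩ := hg x hx
  exact ⟨hfi.add hgi, by rw [integral_add hfi hgi]; linarith⟩

lemma const_mul (hf : SuperharmonicOn ν f s) {c : ℝ} (hc : 0 ≤ c) :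
    SuperharmonicOn ν (fun y => c * f y) s := by
  intro x hx
  obtain ⟨hfi, hfle⟩ := hf x hx
  exact ⟨hfi.const_mul c, by rw [integral_const_mul]; exact mul_le_mul_of_nonneg_left hfle hc⟩

lemma comp_sub_const (hf : SuperharmonicOn ν f s) (c : ℝ) :
    SuperharmonicOn ν (fun y => f (y - c)) {y | y - c ∈ s} := by
  intro x hx
  simpa only [sub_add_eq_add_sub] using hf (x - c) hx

lemma lintegral_ofReal_le (hf : SuperharmonicOn ν f s) (hf0 : ∀ y, 0 ≤ f y) {x : ℝ}
    (hx : x ∈ s) : ∫⁻ t, ENNReal.ofReal (f (x + t)) ∂ν ≤ ENNReal.ofReal (f x) := by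
  obtain ⟨hfi, hfle⟩ := hf x hx
  rw [← ofReal_integral_eq_lintegral_ofReal hfi (ae_of_all _ fun t => hf0 _)]
  exact ENNReal.ofReal_le_ofReal hfle

end SuperharmonicOn

section Barriers

variable {ν : Measure ℝ}

lemma superharmonicOn_affine [IsProbabilityMeasure ν] (hid : Integrable (fun t => t) ν)
    (hmean : ∫ t, t ∂ν = 0) (α β : ℝ) (s : Set ℝ) : SuperharmonicOn ν (fun y => α + β * y) s := by
  intro x _
  simp only [mul_add, ← add_assoc]
  refine ⟨(integrable_const _).add (hid.const_mul β), le_of_eq ?_⟩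
  rw [integral_add (integrable_const _) (hid.const_mul β), integral_const_mul]
  simp [hmean]

lemma one_lt_mgf [IsProbabilityMeasure ν] {u : ℝ} (hu : u ≠ 0)
    (hexp : Integrable (fun t => exp (u * t)) ν)
    (hid : Integrable (fun t => t) ν) (hmean : ∫ t, t ∂ν = 0) (hν : ¬ ∀ᵐ t ∂ν, t = 0) :
    1 < mgf id ν u := by
  have hlin : Integrable (fun t => 1 + u * t) ν := (integrable_const 1).add (hid.const_mul u)
  -- `exp z - (1 + z)` is nonnegative and vanishes only at `z = 0`
  have hgap : 0 < ∫ t, (exp (u * t) - (1 + u * t)) ∂ν := by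
    have hsupp : Function.support (fun t => exp (u * t) - (1 + u * t)) = {t | t ≠ 0} := by
      ext t
      simp only [Function.mem_support, Set.mem_ofPred_eq, sub_ne_zero]
      refine ⟨fun h ht => by simp [ht] at h, fun ht => ?_⟩
      linarith [add_one_lt_exp (mul_ne_zero hu ht)]
    rw [integral_pos_iff_support_of_nonneg (f := fun t => exp (u * t) - (1 + u * t))
      (fun t => by simp only [Pi.zero_apply]; linarith [add_one_le_exp (u * t)])
      (hexp.sub hlin), hsupp, pos_iff_ne_zero]
    simpa [ae_iff] using hν
  rw [integral_sub hexp hlin, integral_add (integrable_const 1) (hid.const_mul u),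
    integral_const_mul, hmean] at hgap
  simpa [mgf] using hgap

lemma superharmonicOn_exp_sq_sub {p q u : ℝ} (hu : Integrable (fun t => exp (u * t)) ν)
    (h2u : Integrable (fun t => exp (2 * u * t)) ν) (hp : 0 ≤ p) (h1 : 1 ≤ mgf id ν (2 * u))
    (hpq : p * (mgf id ν (2 * u) - 1) ≤ q * (mgf id ν u - 1)) :
    SuperharmonicOn ν (fun y => p * exp (u * y) ^ 2 - q * exp (u * y)) {y | u * y ≤ 0} := by
  intro x hx
  have hsq : ∀ y, exp (u * y) ^ 2 = exp (2 * u * y) := fun y => by rw [← exp_nat_mul]; ring_nf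
  have hfun : (fun t => p * exp (u * (x + t)) ^ 2 - q * exp (u * (x + t))) =
      fun t => p * exp (2 * u * x) * exp (2 * u * t) - q * exp (u * x) * exp (u * t) := by
    funext t
    rw [hsq, mul_add, mul_add, exp_add, exp_add]
    ring
  rw [hfun]
  refine ⟨(h2u.const_mul _).sub (hu.const_mul _), ?_⟩
  rw [integral_sub (h2u.const_mul _) (hu.const_mul _), integral_const_mul, integral_const_mul]
  change p * exp (2 * u * x) * mgf id ν (2 * u) - q * exp (u * x) * mgf id ν u ≤
    p * exp (u * x) ^ 2 - q * exp (u * x)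
  rw [hsq]
  have hmono : exp (2 * u * x) ≤ exp (u * x) := exp_le_exp.2 (by linarith [hx.out])
  nlinarith [mul_le_mul_of_nonneg_right hmono (mul_nonneg hp (sub_nonneg.2 h1)),
    mul_le_mul_of_nonneg_left hpq (exp_pos (u * x)).le]

lemma exists_left_barrier [IsProbabilityMeasure ν] (hid : Integrable (fun t => t) ν)
    (hmean : ∫ t, t ∂ν = 0) (hν : ¬ ∀ᵐ t ∂ν, t = 0)
    (hu : Integrable (fun t => exp (-(1 / 2) * t)) ν)
    (h2u : Integrable (fun t => exp (2 * -(1 / 2) * t)) ν) :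
    ∃ l : ℝ → ℝ, ∃ A : ℝ, 0 ≤ A ∧ Continuous l ∧ SuperharmonicOn ν l (Set.Ici 0) ∧
      (∀ y, exp (-y) ≤ l y + A) ∧
      ∀ y, 0 ≤ y → -(A * exp (-(1 / 2) * y)) ≤ l y ∧ l y ≤ 2 * exp (-(1 / 2) * y) := by
  have hM1 := one_lt_mgf (by norm_num) hu hid hmean hν
  have hM2 := one_lt_mgf (by norm_num) h2u hid hmean hν
  set ε := 2 * (mgf id ν (2 * -(1 / 2)) - 1) / (mgf id ν (-(1 / 2)) - 1)
  have hε : 0 ≤ ε := div_nonneg (by linarith) (by linarith)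
  have hpq : 2 * (mgf id ν (2 * -(1 / 2)) - 1) = ε * (mgf id ν (-(1 / 2)) - 1) :=
    (div_mul_cancel₀ _ (by linarith)).symm
  refine ⟨fun y => 2 * exp (-(1 / 2) * y) ^ 2 - ε * exp (-(1 / 2) * y), ε + ε ^ 2 / 4,
    by positivity, by fun_prop, ?_, fun y => ?_, fun y hy => ?_⟩
  · refine (superharmonicOn_exp_sq_sub hu h2u zero_le_two hM2.le hpq.le).mono fun y hy => ?_
    simp only [Set.mem_Ici, Set.mem_ofPred_eq] at hy ⊢
    linarith
  · have hsq : exp (-y) = exp (-(1 / 2) * y) ^ 2 := by rw [← exp_nat_mul]; ring_nf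
    nlinarith [sq_nonneg (exp (-(1 / 2) * y) - ε / 2)]
  · have hs0 := exp_pos (-(1 / 2) * y)
    have hs1 : exp (-(1 / 2) * y) ≤ 1 := exp_le_one_iff.2 (by linarith)
    constructor <;> nlinarith [mul_nonneg hε hs0.le]

lemma exists_right_barrier [IsProbabilityMeasure ν] (hid : Integrable (fun t => t) ν)
    (hmean : ∫ t, t ∂ν = 0) (hν : ¬ ∀ᵐ t ∂ν, t = 0) {δ : ℝ} (hδ : 0 < δ)
    (hu : Integrable (fun t => exp (δ * t)) ν)
    (h2u : Integrable (fun t => exp (2 * δ * t)) ν) {A : ℝ} (hA : 0 ≤ A) :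
    ∃ R : ℝ → ℝ, ∃ C : ℝ, Continuous R ∧ SuperharmonicOn ν R (Set.Iic 0) ∧
      (∀ z, A * max 1 (1 - z) ≤ R z) ∧ ∀ z ≤ 0, R z ≤ C * (1 - z) := by
  have hM1 := one_lt_mgf hδ.ne' hu hid hmean hν
  have hM2 := one_lt_mgf (by positivity) h2u hid hmean hν
  set r := (mgf id ν (2 * δ) - 1) / (mgf id ν δ - 1)
  have hr : 0 ≤ r := div_nonneg (by linarith) (by linarith)
  have hpq : 1 * (mgf id ν (2 * δ) - 1) = r * (mgf id ν δ - 1) := by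
    rw [one_mul]; exact (div_mul_cancel₀ _ (by linarith)).symm
  set K := r + A / δ with hK
  set C₀ := A + r + K ^ 2 / 4 with hC₀
  refine ⟨fun z => (C₀ + -A * z) + (1 * exp (δ * z) ^ 2 - r * exp (δ * z)), C₀ + 1,
    by fun_prop, ?_, fun z => ?_, fun z hz => ?_⟩
  · refine (superharmonicOn_affine hid hmean _ _ _).add
      ((superharmonicOn_exp_sq_sub hu h2u zero_le_one hM2.le hpq.le).mono fun z hz => ?_)
    simp only [Set.mem_Iic, Set.mem_ofPred_eq] at hz ⊢
    nlinarith
  · have hs0 := exp_pos (δ * z)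
    rcases le_total z 0 with hz | hz
    · have hs1 : exp (δ * z) ≤ 1 := exp_le_one_iff.2 (by nlinarith)
      dsimp only
      rw [max_def]
      split_ifs <;> nlinarith [mul_le_mul_of_nonneg_left hs1 hr, sq_nonneg K]
    · -- the quadratic `s ^ 2 - K s` in `s = exp (δ z) ≥ 1 + δ z` absorbs the linear decay `- A z`
      have hAz : A * z ≤ A / δ * exp (δ * z) := by
        rw [div_mul_eq_mul_div, le_div_iff₀ hδ]
        nlinarith [add_one_le_exp (δ * z), mul_nonneg hA hz]
      dsimp only
      rw [max_eq_left (by linarith)]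
      nlinarith [sq_nonneg (exp (δ * z) - K / 2)]
  · have hs1 : exp (δ * z) ≤ 1 := exp_le_one_iff.2 (by nlinarith)
    have hs0 := exp_pos (δ * z)
    dsimp only
    nlinarith [mul_nonneg hr hs0.le, sq_nonneg K]

end Barriers

lemma integrable_id_of_integrable_exp {ν : Measure ℝ} {l u : ℝ} (hl : l < 0) (hu : 0 < u)
    (hexp : ∀ v ∈ Set.Icc l u, Integrable (fun t => exp (v * t)) ν) :
    Integrable (fun t => t) ν := by
  refine integrable_of_mem_interior_integrableExpSet (X := id) (mem_interior_iff_mem_nhds.2 ?_)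
  exact Filter.mem_of_superset (Ioo_mem_nhds hl hu) fun v hv => hexp v (Set.Ioo_subset_Icc_self hv)

theorem exists_exit_supersolution {ν : Measure ℝ} [IsProbabilityMeasure ν] {δ : ℝ} (hδ : 0 < δ)
    (hexp : ∀ u ∈ Set.Icc (-1) (2 * δ), Integrable (fun t => exp (u * t)) ν)
    (hmean : ∫ t, t ∂ν = 0) (hν : ¬ ∀ᵐ t ∂ν, t = 0) :
    ∃ c : ℝ, 1 < c ∧ ∀ L : ℝ, 0 < L → ∃ Φ : ℝ → ℝ, Continuous Φ ∧ (∀ y, 0 ≤ Φ y) ∧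
      (∀ y ≤ 0, exp (-y) ≤ Φ y) ∧ SuperharmonicOn ν Φ (Set.Icc 0 L) ∧
      ∀ a ∈ Set.Icc 0 L, Φ a ≤ c * (L - a + 1) / L := by
  have hid := integrable_id_of_integrable_exp (by norm_num) (by positivity) hexp
  have mem : ∀ u, -1 ≤ u → u ≤ 2 * δ → u ∈ Set.Icc (-1) (2 * δ) := fun u h₁ h₂ => ⟨h₁, h₂⟩
  obtain ⟨l, A, hA, hlc, hlsup, hlpay, hlbd⟩ := exists_left_barrier hid hmean hν
    (hexp _ (mem _ (by norm_num) (by linarith))) (hexp _ (mem _ (by norm_num) (by linarith)))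
  obtain ⟨R, C, hRc, hRsup, hRlow, hRup⟩ := exists_right_barrier hid hmean hν hδ
    (hexp _ (mem _ (by linarith) (by linarith))) (hexp _ (mem _ (by linarith) le_rfl)) hA
  have hAC : A ≤ C := by simpa using (hRlow 0).trans (hRup 0 le_rfl)
  refine ⟨2 + C, by linarith, fun L hL => ?_⟩
  have hRL : ∀ y, A * max 1 (1 + L - y) ≤ L * (L⁻¹ * R (y - L)) := fun y => by
    rw [mul_inv_cancel_left₀ hL.ne']
    simpa only [sub_sub_eq_add_sub, add_comm] using hRlow (y - L)
  have hpay : ∀ y ≤ 0, exp (-y) ≤ l y + L⁻¹ * R (y - L) := fun y hy => by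
    have := hRL y
    nlinarith [hlpay y, le_max_right 1 (1 + L - y), mul_le_mul_of_nonneg_left
      (show L ≤ max 1 (1 + L - y) from (by linarith : L ≤ 1 + L - y).trans (le_max_right _ _)) hA]
  refine ⟨fun y => l y + L⁻¹ * R (y - L), by fun_prop, fun y => ?_, hpay, ?_, fun a ha => ?_⟩
  · rcases le_total y 0 with hy | hy
    · exact (exp_pos _).le.trans (hpay y hy)
    · have := mul_le_mul_of_nonneg_left (mul_exp_neg_half_mul_le_max L hy) hA
      nlinarith [hRL y, (hlbd y hy).1]
  · refine (hlsup.mono Set.Icc_subset_Ici_self).add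
      (((hRsup.comp_sub_const L).const_mul (inv_nonneg.2 hL.le)).mono fun y hy => ?_)
    simp only [Set.mem_ofPred_eq, Set.mem_Iic]
    linarith [hy.2]
  · have hs := mul_exp_neg_half_mul_le_max L ha.1
    rw [max_eq_right (by linarith [ha.2])] at hs
    have hR := hRup (a - L) (by linarith [ha.2])
    rw [le_div_iff₀ hL]
    have hΦ : (l a + L⁻¹ * R (a - L)) * L = L * l a + R (a - L) := by field_simp
    rw [hΦ]
    nlinarith [(hlbd a ha.1).2]

lemma ENat.biInf_natCast_eq {P : ℕ → Prop} {m : ℕ} (hm : P m) (hmin : ∀ k < m, ¬ P k) :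
    ⨅ (n : ℕ) (_ : P n), (n : ℕ∞) = m := by
  refine le_antisymm (biInf_le _ hm) (le_iInf₂ fun k hk => ?_)
  exact_mod_cast not_lt.1 fun hkm => hmin k hkm hk

lemma ENat.natCast_lt_biInf_iff {P : ℕ → Prop} {m : ℕ} :
    (m : ℕ∞) < ⨅ (n : ℕ) (_ : P n), (n : ℕ∞) ↔ ∀ k ≤ m, ¬ P k := by
  refine ⟨fun h k hkm hk => (biInf_le _ hk).trans (by exact_mod_cast hkm) |>.not_gt h,
    fun h => ?_⟩
  refine (ENat.natCast_lt_natCast.2 m.lt_succ_self).trans_le (le_iInf₂ fun k hk => ?_)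
  exact_mod_cast Nat.succ_le_of_lt (not_le.1 fun hkm => h k hkm hk)

lemma ENat.exists_of_biInf_natCast_ne_top {P : ℕ → Prop}
    (h : ⨅ (n : ℕ) (_ : P n), (n : ℕ∞) ≠ ⊤) : ∃ n, P n := by
  contrapose! h
  simp [h]

section Walk

variable {X : ℕ → Ω → ℝ} {x a b : ℝ}

omit [MeasurableSpace Ω] in
@[simp] lemma walk_zero : walk X x 0 = fun _ => x := by
  ext; simp [walk]

omit [MeasurableSpace Ω] in
lemma walk_succ (n : ℕ) (ω : Ω) :
    walk X x (n + 1) ω = walk X x n ω + X n ω := by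
  simp only [walk, Finset.sum_range_succ, add_assoc]

lemma measurable_walk (hX : ∀ i, Measurable (X i)) (x : ℝ) (n : ℕ) : Measurable (walk X x n) :=
  measurable_const.add (Finset.measurable_sum _ fun i _ => hX i)

def walkStaysIn (X : ℕ → Ω → ℝ) (x a b : ℝ) (n : ℕ) : Set Ω :=
  {ω | ∀ k < n, walk X x k ω ∈ Set.Icc a b}

def walkExitsBelowAt (X : ℕ → Ω → ℝ) (x a b : ℝ) (m : ℕ) : Set Ω :=
  walkStaysIn X x a b m ∩ {ω | walk X x m ω < a}

omit [MeasurableSpace Ω] in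
@[simp] lemma walkStaysIn_zero : walkStaysIn X x a b 0 = Set.univ := by
  simp [walkStaysIn]

omit [MeasurableSpace Ω] in
lemma walkStaysIn_succ (n : ℕ) :
    walkStaysIn X x a b (n + 1) = walkStaysIn X x a b n ∩ {ω | walk X x n ω ∈ Set.Icc a b} := by
  ext ω
  exact Nat.forall_lt_succ_right

lemma measurableSet_walkStaysIn (hX : ∀ i, Measurable (X i)) (n : ℕ) :
    MeasurableSet (walkStaysIn X x a b n) := by
  induction n with
  | zero => simp
  | succ n ih =>
    rw [walkStaysIn_succ]
    exact ih.inter (measurable_walk hX x n measurableSet_Icc)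

lemma measurableSet_walkExitsBelowAt (hX : ∀ i, Measurable (X i)) (m : ℕ) :
    MeasurableSet (walkExitsBelowAt X x a b m) :=
  (measurableSet_walkStaysIn hX m).inter
    (measurableSet_lt (measurable_walk hX x m) measurable_const)

omit [MeasurableSpace Ω] in
lemma pairwise_disjoint_walkExitsBelowAt :
    Pairwise (Disjoint on walkExitsBelowAt X x a b) := by
  suffices ∀ m m', m < m' → Disjoint (walkExitsBelowAt X x a b m) (walkExitsBelowAt X x a b m') by
    intro m m' hne
    rcases hne.lt_or_gt with h | h
    exacts [this m m' h, (this m' m h).symm]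
  intro m m' hlt
  refine Set.disjoint_left.2 fun ω hm hm' => ?_
  exact (hm'.1 m hlt).1.not_gt hm.2

omit [MeasurableSpace Ω] in
lemma hitBelow_eq_of_mem_walkExitsBelowAt {m : ℕ} {ω : Ω}
    (h : ω ∈ walkExitsBelowAt X x a b m) : hitBelow X x a ω = m :=
  ENat.biInf_natCast_eq h.2 fun k hk => not_lt.2 (h.1 k hk).1

omit [MeasurableSpace Ω] in
lemma stopBelow_eq_of_mem_walkExitsBelowAt {m : ℕ} {ω : Ω}
    (h : ω ∈ walkExitsBelowAt X x a b m) : stopBelow X x a ω = walk X x m ω := by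
  rw [stopBelow, hitBelow_eq_of_mem_walkExitsBelowAt h, ENat.toNat_natCast]

omit [MeasurableSpace Ω] in
lemma hitBelow_lt_hitAbove_iff (hab : a ≤ b) {ω : Ω} :
    hitBelow X x a ω < hitAbove X x b ω ↔ ω ∈ ⋃ m, walkExitsBelowAt X x a b m := by
  classical
  simp only [Set.mem_iUnion]
  constructor
  · intro h
    have hex := ENat.exists_of_biInf_natCast_ne_top (ne_top_of_lt h)
    have hmin : ∀ k < Nat.find hex, ¬ walk X x k ω < a := fun k hk => Nat.find_min hex hk
    have hB : hitBelow X x a ω = Nat.find hex := ENat.biInf_natCast_eq (Nat.find_spec hex) hmin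
    rw [hB, hitAbove, ENat.natCast_lt_biInf_iff] at h
    exact ⟨Nat.find hex, fun k hk => ⟨not_lt.1 (hmin k hk), not_lt.1 (h k hk.le)⟩,
      Nat.find_spec hex⟩
  · rintro ⟨m, hm⟩
    rw [hitBelow_eq_of_mem_walkExitsBelowAt hm, hitAbove, ENat.natCast_lt_biInf_iff]
    intro k hk
    rcases hk.lt_or_eq with hk | rfl
    exacts [not_lt.2 (hm.1 k hk).2, not_lt.2 (hm.2.le.trans hab)]

end Walk

lemma ProbabilityTheory.IndepFun.lintegral_comp_prodMk {β γ : Type*} [MeasurableSpace β]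
    [MeasurableSpace γ] {μ : Measure Ω} [IsFiniteMeasure μ] {V : Ω → β} {Y : Ω → γ}
    (h : IndepFun V Y μ) (hV : Measurable V) (hY : Measurable Y) {H : β × γ → ℝ≥0∞}
    (hH : Measurable H) :
    ∫⁻ ω, H (V ω, Y ω) ∂μ = ∫⁻ v, ∫⁻ y, H (v, y) ∂(μ.map Y) ∂(μ.map V) := by
  rw [← lintegral_map hH (hV.prodMk hY),
    (indepFun_iff_map_prod_eq_prod_map_map hV.aemeasurable hY.aemeasurable).1 h,
    lintegral_prod _ hH.aemeasurable]

lemma ProbabilityTheory.iIndepFun.indepFun_truncate {μ : Measure Ω} {X : ℕ → Ω → ℝ}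
    (hX : ∀ i, Measurable (X i)) (h : iIndepFun X μ) (n : ℕ) :
    IndepFun (fun ω i => if i < n then X i ω else 0) (X n) μ := by
  have hfin := h.indepFun_finset (Finset.range n) {n} (by simp) hX
  let pad : (Finset.range n → ℝ) → ℕ → ℝ := fun v i =>
    if hi : i < n then v ⟨i, Finset.mem_range.2 hi⟩ else 0
  have hpad : Measurable pad := measurable_pi_lambda _ fun i => by
    by_cases hi : i < n
    · simpa [pad, hi] using measurable_pi_apply _
    · simp [pad, hi]
  convert hfin.comp hpad (measurable_pi_apply ⟨n, Finset.mem_singleton_self n⟩) using 1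
  · ext ω i
    by_cases hi : i < n <;> simp [pad, hi]
  · rfl

lemma ENNReal.tsum_le_of_add_le_succ {u v : ℕ → ℝ≥0∞} (h : ∀ n, v n + u (n + 1) ≤ u n) :
    ∑' n, v n ≤ u 0 := by
  have hsum : ∀ n, ∑ m ∈ Finset.range n, v m + u n ≤ u 0 := by
    intro n
    induction n with
    | zero => simp
    | succ n ih =>
      rw [Finset.sum_range_succ, add_assoc]
      exact (add_le_add_right (h n) _).trans ih
  exact ENNReal.tsum_le_of_sum_range_le fun n => le_self_add.trans (hsum n)

section Stopping

variable {μ : Measure Ω} {X : ℕ → Ω → ℝ} {x a b : ℝ}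

omit [MeasurableSpace Ω] in
lemma walk_eq_walk_truncate {n k : ℕ} (hk : k ≤ n) (ω : Ω) :
    walk X x k ω = walk (fun i (v : ℕ → ℝ) => v i) x k (fun i => if i < n then X i ω else 0) := by
  simp only [walk]
  exact congrArg _ (Finset.sum_congr rfl fun i hi => by
    rw [if_pos ((Finset.mem_range.1 hi).trans_le hk)])

/-- The supermartingale step: `X n` is independent of the walk up to time `n` and has law `ν`. -/
lemma setLIntegral_walkStaysIn_succ_le [IsProbabilityMeasure μ] (hX : ∀ i, Measurable (X i))
    (hind : iIndepFun X μ) {ν : Measure ℝ} (hν : ∀ i, μ.map (X i) = ν) {Φ : ℝ → ℝ}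
    (hΦm : Measurable Φ) (hΦ0 : ∀ y, 0 ≤ Φ y) (hsup : SuperharmonicOn ν Φ (Set.Icc a b))
    (n : ℕ) :
    ∫⁻ ω in walkStaysIn X x a b (n + 1), ENNReal.ofReal (Φ (walk X x (n + 1) ω)) ∂μ ≤
      ∫⁻ ω in walkStaysIn X x a b (n + 1), ENNReal.ofReal (Φ (walk X x n ω)) ∂μ := by
  set V : Ω → ℕ → ℝ := fun ω i => if i < n then X i ω else 0
  set W := walk (fun i (v : ℕ → ℝ) => v i) x
  set D := walkStaysIn (fun i (v : ℕ → ℝ) => v i) x a b (n + 1)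
  have hcoord : ∀ i, Measurable fun v : ℕ → ℝ => v i := measurable_pi_apply
  have hVm : Measurable V := measurable_pi_lambda _ fun i => by
    by_cases hi : i < n
    · simpa [V, hi] using hX i
    · simp [V, hi]
  have hD : MeasurableSet D := measurableSet_walkStaysIn hcoord (n + 1)
  have hpre : walkStaysIn X x a b (n + 1) = V ⁻¹' D := by
    ext ω
    exact forall₂_congr fun k hk => by rw [walk_eq_walk_truncate (Nat.lt_succ_iff.1 hk)]
  have hH : Measurable ((Prod.fst ⁻¹' D).indicator fun p : (ℕ → ℝ) × ℝ =>
      ENNReal.ofReal (Φ (W n p.1 + p.2))) :=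
    (ENNReal.measurable_ofReal.comp (hΦm.comp
      (((measurable_walk hcoord x n).comp measurable_fst).add measurable_snd))).indicator
      (measurable_fst hD)
  rw [hpre, ← lintegral_indicator (hD.preimage hVm), ← lintegral_indicator (hD.preimage hVm)]
  calc ∫⁻ ω, (V ⁻¹' D).indicator (fun ω => ENNReal.ofReal (Φ (walk X x (n + 1) ω))) ω ∂μ
      = ∫⁻ ω, (Prod.fst ⁻¹' D).indicator (fun p => ENNReal.ofReal (Φ (W n p.1 + p.2)))
          (V ω, X n ω) ∂μ := by
        refine lintegral_congr fun ω => ?_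
        simp only [Set.indicator, Set.mem_preimage]
        rw [walk_succ, walk_eq_walk_truncate le_rfl]
        rfl
    _ = ∫⁻ v, ∫⁻ t, (Prod.fst ⁻¹' D).indicator (fun p => ENNReal.ofReal (Φ (W n p.1 + p.2)))
          (v, t) ∂ν ∂(μ.map V) := by
        rw [(hind.indepFun_truncate hX n).lintegral_comp_prodMk hVm (hX n) hH, hν n]
    _ ≤ ∫⁻ v, D.indicator (fun v => ENNReal.ofReal (Φ (W n v))) v ∂(μ.map V) := by
        refine lintegral_mono fun v => ?_
        by_cases hv : v ∈ D
        · simp only [Set.indicator, Set.mem_preimage, hv, if_true]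
          exact hsup.lintegral_ofReal_le hΦ0 (hv n n.lt_succ_self)
        · simp [Set.indicator, hv]
    _ = ∫⁻ ω, (V ⁻¹' D).indicator (fun ω => ENNReal.ofReal (Φ (walk X x n ω))) ω ∂μ := by
        rw [lintegral_map (f := D.indicator fun v => ENNReal.ofReal (Φ (W n v)))
          ((ENNReal.measurable_ofReal.comp (hΦm.comp (measurable_walk hcoord x n))).indicator hD)
          hVm]
        refine lintegral_congr fun ω => ?_
        simp only [Set.indicator, Set.mem_preimage]
        rw [walk_eq_walk_truncate le_rfl]
        rfl

omit [MeasurableSpace Ω] in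
lemma ite_hitBelow_lt_hitAbove_eq_indicator (hab : a ≤ b) (g : ℝ → ℝ≥0∞) :
    (fun ω => if hitBelow X x a ω < hitAbove X x b ω then g (stopBelow X x a ω) else 0) =
      (⋃ m, walkExitsBelowAt X x a b m).indicator fun ω => g (stopBelow X x a ω) := by
  classical
  exact funext fun ω => if_congr (hitBelow_lt_hitAbove_iff hab) rfl rfl

lemma lintegral_ite_hitBelow_lt_hitAbove_eq_tsum (hX : ∀ i, Measurable (X i)) (hab : a ≤ b)
    (g : ℝ → ℝ≥0∞) :
    ∫⁻ ω, (if hitBelow X x a ω < hitAbove X x b ω then g (stopBelow X x a ω) else 0) ∂μ =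
      ∑' m, ∫⁻ ω in walkExitsBelowAt X x a b m, g (walk X x m ω) ∂μ := by
  have hE : ∀ m, MeasurableSet (walkExitsBelowAt X x a b m) := measurableSet_walkExitsBelowAt hX
  rw [ite_hitBelow_lt_hitAbove_eq_indicator hab, lintegral_indicator (MeasurableSet.iUnion hE),
    lintegral_iUnion hE pairwise_disjoint_walkExitsBelowAt]
  exact tsum_congr fun m => setLIntegral_congr_fun (hE m) fun ω hω => by
    rw [stopBelow_eq_of_mem_walkExitsBelowAt hω]

lemma setLIntegral_walkExitsBelowAt_add_le [IsProbabilityMeasure μ] (hX : ∀ i, Measurable (X i))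
    (hind : iIndepFun X μ) {ν : Measure ℝ} (hν : ∀ i, μ.map (X i) = ν) {Φ h : ℝ → ℝ}
    (hΦm : Measurable Φ) (hΦ0 : ∀ y, 0 ≤ Φ y) (hhΦ : ∀ y < a, h y ≤ Φ y)
    (hsup : SuperharmonicOn ν Φ (Set.Icc a b)) (n : ℕ) :
    ∫⁻ ω in walkExitsBelowAt X x a b n, ENNReal.ofReal (h (walk X x n ω)) ∂μ +
        ∫⁻ ω in walkStaysIn X x a b (n + 1), ENNReal.ofReal (Φ (walk X x (n + 1) ω)) ∂μ ≤
      ∫⁻ ω in walkStaysIn X x a b n, ENNReal.ofReal (Φ (walk X x n ω)) ∂μ := by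
  have hdisj : Disjoint (walkExitsBelowAt X x a b n) (walkStaysIn X x a b (n + 1)) := by
    rw [walkStaysIn_succ]
    exact Set.disjoint_left.2 fun ω hE hS => hS.2.1.not_gt hE.2
  have hsub : walkExitsBelowAt X x a b n ∪ walkStaysIn X x a b (n + 1) ⊆ walkStaysIn X x a b n := by
    rw [walkStaysIn_succ]
    exact Set.union_subset Set.inter_subset_left Set.inter_subset_left
  calc _ ≤ ∫⁻ ω in walkExitsBelowAt X x a b n, ENNReal.ofReal (Φ (walk X x n ω)) ∂μ +
        ∫⁻ ω in walkStaysIn X x a b (n + 1), ENNReal.ofReal (Φ (walk X x n ω)) ∂μ :=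
      add_le_add (setLIntegral_mono (ENNReal.measurable_ofReal.comp
        (hΦm.comp (measurable_walk hX x n))) fun ω hω => ENNReal.ofReal_le_ofReal (hhΦ _ hω.2))
        (setLIntegral_walkStaysIn_succ_le hX hind hν hΦm hΦ0 hsup n)
    _ = ∫⁻ ω in walkExitsBelowAt X x a b n ∪ walkStaysIn X x a b (n + 1),
          ENNReal.ofReal (Φ (walk X x n ω)) ∂μ :=
      (lintegral_union (measurableSet_walkStaysIn hX _) hdisj).symm
    _ ≤ _ := lintegral_mono_set hsub

/-- Optional stopping at the exit from `[a, b]`, by telescoping over the exit time. -/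
theorem lintegral_exitBelow_le [IsProbabilityMeasure μ] (hX : ∀ i, Measurable (X i))
    (hind : iIndepFun X μ) {ν : Measure ℝ} (hν : ∀ i, μ.map (X i) = ν) {Φ h : ℝ → ℝ}
    (hΦm : Measurable Φ) (hΦ0 : ∀ y, 0 ≤ Φ y) (hhΦ : ∀ y < a, h y ≤ Φ y)
    (hsup : SuperharmonicOn ν Φ (Set.Icc a b)) (hab : a ≤ b) (x : ℝ) :
    ∫⁻ ω, (if hitBelow X x a ω < hitAbove X x b ω
        then ENNReal.ofReal (h (stopBelow X x a ω)) else 0) ∂μ ≤ ENNReal.ofReal (Φ x) := by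
  rw [lintegral_ite_hitBelow_lt_hitAbove_eq_tsum hX hab (fun y => ENNReal.ofReal (h y))]
  calc _ ≤ ∫⁻ ω in walkStaysIn X x a b 0, ENNReal.ofReal (Φ (walk X x 0 ω)) ∂μ :=
        ENNReal.tsum_le_of_add_le_succ (u := fun n => ∫⁻ ω in walkStaysIn X x a b n,
          ENNReal.ofReal (Φ (walk X x n ω)) ∂μ)
          (setLIntegral_walkExitsBelowAt_add_le hX hind hν hΦm hΦ0 hhΦ hsup)
    _ = ENNReal.ofReal (Φ x) := by simp

end Stopping

/-- Lemma `lem:estcrit`, (pal). For a centered random walk with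
positive variance and exponential moments on `(-(1+η), η)`, there is `c > 1` such that
for all `L ≥ 1` and `0 ≤ a ≤ L`:
`E_a[e^{-S_{τ_0^-}} 1_{τ_0^- < τ_L^+}] ≤ c (L - a + 1)/L`. -/
theorem centered_exit_below_exponential_bound
    (μ : Measure Ω) [IsProbabilityMeasure μ]
    (X : ℕ → Ω → ℝ) (hmeas : ∀ i, Measurable (X i))
    (hindep : iIndepFun X μ)
    (hident : ∀ i, IdentDistrib (X i) (X 0) μ μ)
    (hcent : ∫ ω, X 0 ω ∂μ = 0)
    (hvar : 0 < variance (X 0) μ)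
    (η : ℝ) (hη : 0 < η)
    (hexp : ∀ u : ℝ, -(1 + η) < u → u < η →
      Integrable (fun ω => Real.exp (u * X 0 ω)) μ)
    :
    ∃ c : ℝ, 1 < c ∧ ∀ L : ℝ, 1 ≤ L → ∀ a : ℝ, 0 ≤ a → a ≤ L →
      ∫⁻ ω, (if hitBelow X a 0 ω < hitAbove X a L ω
          then ENNReal.ofReal (Real.exp (-stopBelow X a 0 ω)) else 0) ∂μ
        ≤ ENNReal.ofReal (c * (L - a + 1) / L) := by
  set ν := μ.map (X 0)
  have : IsProbabilityMeasure ν := Measure.isProbabilityMeasure_map (hmeas 0).aemeasurable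
  have hν : ∀ i, μ.map (X i) = ν := fun i => (hident i).map_eq
  have hexpν : ∀ u ∈ Set.Icc (-1) (2 * (η / 3)), Integrable (fun t => exp (u * t)) ν :=
    fun u hu => (integrable_map_measure (by fun_prop) (hmeas 0).aemeasurable).2
      (hexp u (by linarith [hu.1]) (by linarith [hu.2]))
  have hmean : ∫ t, t ∂ν = 0 := by
    rwa [integral_map (hmeas 0).aemeasurable aestronglyMeasurable_id (f := fun t => t)]
  have hnondeg : ¬ ∀ᵐ t ∂ν, t = 0 := fun h0 => by
    have hX0 : X 0 =ᵐ[μ] 0 := ae_of_ae_map (hmeas 0).aemeasurable h0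
    rw [variance_congr hX0, variance_zero] at hvar
    exact lt_irrefl 0 hvar
  obtain ⟨c, hc, hΦ⟩ := exists_exit_supersolution (by positivity) hexpν hmean hnondeg
  refine ⟨c, hc, fun L hL a ha haL => ?_⟩
  obtain ⟨Φ, hΦc, hΦ0, hpay, hsup, hval⟩ := hΦ L (by linarith)
  calc _ ≤ ENNReal.ofReal (Φ a) := lintegral_exitBelow_le hmeas hindep hν hΦc.measurable hΦ0
        (fun y hy => hpay y hy.le) hsup (by linarith) a
    _ ≤ _ := ENNReal.ofReal_le_ofReal (hval a ⟨ha, haL⟩)
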